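/- Strong duality form of the regularized least squares problem: for X ∈ ℝ^(p×Q), Y ∈ ℝ^(Q×1), ξ > 0, min_{w ∈ ℝ^p} (1/(2Q))‖Xᵀw − Y‖² + ξ‖w‖² = max_{α ∈ ℝ^Q} { −(1/(4ξQ²))‖Xα‖² − (1/Q)∑_{m=1}^Q(−α_m y_m + α_m²/2) }. -/
import Mathlib


open Finset Matrix

/-- The key algebraic identity: the primal-dual gap equals a sum of squares. -/
lemma ridge_gap_identity {p Q : ℕ} (hQ : (0:ℝ) < (Q:ℝ)) {ξ : ℝ} (hξ : 0 < ξ)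
    (X : Matrix (Fin p) (Fin Q) ℝ) (Y : Fin Q → ℝ) (w : Fin p → ℝ) (α : Fin Q → ℝ) :
    ((1 / (2 * (Q : ℝ))) * ∑ m, ((∑ k, X k m * w k) - Y m) ^ 2 +
        ξ * ∑ k, (w k) ^ 2) -
      (-(1 / (4 * ξ * (Q : ℝ) ^ 2)) * ∑ k, (∑ m, X k m * α m) ^ 2 -
        (1 / (Q : ℝ)) * ∑ m, (-(α m) * Y m + (α m) ^ 2 / 2)) =
      (1 / (2 * (Q : ℝ))) * ∑ m, ((∑ k, X k m * w k) - Y m + α m) ^ 2 +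
        (1 / (4 * ξ * (Q : ℝ) ^ 2)) *
          ∑ k, (2 * ξ * (Q : ℝ) * w k - ∑ m, X k m * α m) ^ 2 := by
  have hswap : ∑ m, α m * (∑ k, X k m * w k) = ∑ k, w k * (∑ m, X k m * α m) := by
    simp only [Finset.mul_sum]
    rw [Finset.sum_comm]
    exact Finset.sum_congr rfl fun k _ => Finset.sum_congr rfl fun m _ => by ring
  have e1 : ∑ m, ((∑ k, X k m * w k) - Y m + α m) ^ 2 =
      ∑ m, (((∑ k, X k m * w k) - Y m) ^ 2 + (α m) ^ 2 +
        2 * (α m * (∑ k, X k m * w k)) - 2 * (α m * Y m)) :=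
    Finset.sum_congr rfl fun m _ => by ring
  have e2 : ∑ k, (2 * ξ * (Q : ℝ) * w k - ∑ m, X k m * α m) ^ 2 =
      ∑ k, (4 * ξ ^ 2 * (Q : ℝ) ^ 2 * (w k) ^ 2 -
        4 * ξ * (Q : ℝ) * (w k * (∑ m, X k m * α m)) + (∑ m, X k m * α m) ^ 2) :=
    Finset.sum_congr rfl fun k _ => by ring
  have e3 : ∑ m, (-(α m) * Y m + (α m) ^ 2 / 2) =
      ∑ m, ((α m) ^ 2 / 2 - α m * Y m) :=
    Finset.sum_congr rfl fun m _ => by ring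
  have h7 : ∑ m, ((∑ k, X k m * w k) - Y m + α m) ^ 2 =
      (∑ m, ((∑ k, X k m * w k) - Y m) ^ 2) + (∑ m, (α m) ^ 2) +
        2 * (∑ k, w k * (∑ m, X k m * α m)) - 2 * (∑ m, α m * Y m) := by
    rw [e1]
    simp only [Finset.sum_add_distrib, Finset.sum_sub_distrib, ← Finset.mul_sum, hswap]
  have h8 : ∑ k, (2 * ξ * (Q : ℝ) * w k - ∑ m, X k m * α m) ^ 2 =
      4 * ξ ^ 2 * (Q : ℝ) ^ 2 * (∑ k, (w k) ^ 2) -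
        4 * ξ * (Q : ℝ) * (∑ k, w k * (∑ m, X k m * α m)) +
        (∑ k, (∑ m, X k m * α m) ^ 2) := by
    rw [e2]
    simp only [Finset.sum_add_distrib, Finset.sum_sub_distrib, ← Finset.mul_sum]
  have h9 : ∑ m, (-(α m) * Y m + (α m) ^ 2 / 2) =
      (∑ m, (α m) ^ 2) / 2 - ∑ m, α m * Y m := by
    rw [e3]
    simp only [Finset.sum_sub_distrib, ← Finset.sum_div]
  rw [h7, h8, h9]
  have hQ' : (Q:ℝ) ≠ 0 := hQ.ne'
  have hξ' : ξ ≠ 0 := hξ.ne'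
  field_simp
  ring

/-- Strong duality for regularized least squares (scalar-output case of
Lemma 1): `min_w (1/(2Q))‖Xᵀw − Y‖² + ξ‖w‖²` equals
`max_α { −(1/(4ξQ²))‖Xα‖² − (1/Q)∑_m(−α_m y_m + α_m²/2) }`, and both optima
are attained. -/
theorem ridge_strong_duality {p Q : ℕ} (hQ : 0 < Q) (ξ : ℝ) (hξ : 0 < ξ)
    (X : Matrix (Fin p) (Fin Q) ℝ) (Y : Fin Q → ℝ) :
    ∃ (w : Fin p → ℝ) (α : Fin Q → ℝ),
      IsLeast
        (Set.range fun w' : Fin p → ℝ =>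
          (1 / (2 * (Q : ℝ))) * ∑ m, ((∑ k, X k m * w' k) - Y m) ^ 2 +
            ξ * ∑ k, (w' k) ^ 2)
        ((1 / (2 * (Q : ℝ))) * ∑ m, ((∑ k, X k m * w k) - Y m) ^ 2 +
          ξ * ∑ k, (w k) ^ 2) ∧
      IsGreatest
        (Set.range fun α' : Fin Q → ℝ =>
          -(1 / (4 * ξ * (Q : ℝ) ^ 2)) * ∑ k, (∑ m, X k m * α' m) ^ 2 -
            (1 / (Q : ℝ)) * ∑ m, (-(α' m) * Y m + (α' m) ^ 2 / 2))
        (-(1 / (4 * ξ * (Q : ℝ) ^ 2)) * ∑ k, (∑ m, X k m * α m) ^ 2 -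
          (1 / (Q : ℝ)) * ∑ m, (-(α m) * Y m + (α m) ^ 2 / 2)) ∧
      ((1 / (2 * (Q : ℝ))) * ∑ m, ((∑ k, X k m * w k) - Y m) ^ 2 +
          ξ * ∑ k, (w k) ^ 2) =
        (-(1 / (4 * ξ * (Q : ℝ) ^ 2)) * ∑ k, (∑ m, X k m * α m) ^ 2 -
          (1 / (Q : ℝ)) * ∑ m, (-(α m) * Y m + (α m) ^ 2 / 2)) := by
  have hQr : (0:ℝ) < (Q:ℝ) := Nat.cast_pos.mpr hQ
  -- the matrix of the normal equations
  set A : Matrix (Fin p) (Fin p) ℝ :=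
    (2 * ξ * (Q:ℝ)) • (1 : Matrix (Fin p) (Fin p) ℝ) + X * Xᵀ with hA_def
  have hApos : A.PosDef := by
    have h1 : ((2 * ξ * (Q:ℝ)) • (1 : Matrix (Fin p) (Fin p) ℝ)).PosDef := by
      rw [Matrix.smul_one_eq_diagonal]
      exact Matrix.PosDef.diagonal fun _ => by positivity
    have h2 : (X * Xᵀ).PosSemidef := by
      have := Matrix.posSemidef_self_mul_conjTranspose X
      simpa using this
    exact h1.add_posSemidef h2
  have hAunit : IsUnit A.det := (Matrix.isUnit_iff_isUnit_det A).mp hApos.isUnit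
  set w : Fin p → ℝ := A⁻¹ *ᵥ (X *ᵥ Y) with hw_def
  have hAw : A *ᵥ w = X *ᵥ Y := by
    rw [hw_def, Matrix.mulVec_mulVec, Matrix.mul_nonsing_inv A hAunit, Matrix.one_mulVec]
  set α : Fin Q → ℝ := fun m => Y m - ∑ k, X k m * w k with hα_def
  -- the stationarity condition
  have hstat : ∀ k, 2 * ξ * (Q:ℝ) * w k - ∑ m, X k m * α m = 0 := by
    intro k
    have := congrFun hAw k
    rw [hA_def] at this
    simp only [Matrix.add_mulVec, Matrix.smul_mulVec, Matrix.one_mulVec,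
      Pi.add_apply, Pi.smul_apply, smul_eq_mul] at this
    have hmul : ((X * Xᵀ) *ᵥ w) k = ∑ m, X k m * (∑ j, X j m * w j) := by
      rw [← Matrix.mulVec_mulVec]
      simp [Matrix.mulVec, dotProduct, Matrix.transpose_apply]
    have hXY : (X *ᵥ Y) k = ∑ m, X k m * Y m := by
      simp [Matrix.mulVec, dotProduct]
    rw [hmul, hXY] at this
    have : 2 * ξ * (Q:ℝ) * w k = ∑ m, X k m * (Y m - ∑ j, X j m * w j) := by
      rw [Finset.sum_congr rfl fun m _ => mul_sub (X k m) (Y m) (∑ j, X j m * w j),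
        Finset.sum_sub_distrib]
      linarith
    have hαm : ∀ m, α m = Y m - ∑ j, X j m * w j := fun m => rfl
    simp only [hαm]
    rw [sub_eq_zero]
    exact this
  -- residual condition
  have hres : ∀ m, (∑ k, X k m * w k) - Y m + α m = 0 := by
    intro m; rw [hα_def]; ring
  -- primal = dual at (w, α)
  have heq : ((1 / (2 * (Q : ℝ))) * ∑ m, ((∑ k, X k m * w k) - Y m) ^ 2 +
        ξ * ∑ k, (w k) ^ 2) =
      (-(1 / (4 * ξ * (Q : ℝ) ^ 2)) * ∑ k, (∑ m, X k m * α m) ^ 2 -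
        (1 / (Q : ℝ)) * ∑ m, (-(α m) * Y m + (α m) ^ 2 / 2)) := by
    have h := ridge_gap_identity hQr hξ X Y w α
    have z1 : ∑ m, ((∑ k, X k m * w k) - Y m + α m) ^ 2 = 0 := by
      apply Finset.sum_eq_zero; intro m _; rw [hres m]; norm_num
    have z2 : ∑ k, (2 * ξ * (Q:ℝ) * w k - ∑ m, X k m * α m) ^ 2 = 0 := by
      apply Finset.sum_eq_zero; intro k _; rw [hstat k]; norm_num
    rw [z1, z2] at h
    linarith
  -- weak duality via the identity
  have hgap : ∀ (w' : Fin p → ℝ) (α' : Fin Q → ℝ),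
      (-(1 / (4 * ξ * (Q : ℝ) ^ 2)) * ∑ k, (∑ m, X k m * α' m) ^ 2 -
        (1 / (Q : ℝ)) * ∑ m, (-(α' m) * Y m + (α' m) ^ 2 / 2)) ≤
      ((1 / (2 * (Q : ℝ))) * ∑ m, ((∑ k, X k m * w' k) - Y m) ^ 2 +
        ξ * ∑ k, (w' k) ^ 2) := by
    intro w' α'
    have h := ridge_gap_identity hQr hξ X Y w' α'
    have h1 : (0:ℝ) ≤ (1 / (2 * (Q : ℝ))) *
        ∑ m, ((∑ k, X k m * w' k) - Y m + α' m) ^ 2 := by positivity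
    have h2 : (0:ℝ) ≤ (1 / (4 * ξ * (Q : ℝ) ^ 2)) *
        ∑ k, (2 * ξ * (Q : ℝ) * w' k - ∑ m, X k m * α' m) ^ 2 := by positivity
    linarith
  refine ⟨w, α, ⟨⟨w, rfl⟩, ?_⟩, ⟨⟨α, rfl⟩, ?_⟩, heq⟩
  · rintro v ⟨w', rfl⟩
    calc _ = _ := heq
    _ ≤ _ := hgap w' α
  · rintro v ⟨α', rfl⟩
    calc _ ≤ _ := hgap w α'
    _ = _ := heq
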